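/- There exists an absolute constant c > 0, independent of L, such that for every L > 0 and all continuously differentiable test functions u, v on the strip Σ: ∬_Σ |u v v_x| dx dy ≤ c ( ∬_Σ |Du|² dx dy )^{1/4} ( ∬_Σ u² dx dy )^{1/4} ( ∬_Σ |Dv|² dx dy )^{3/4} ( ∬_Σ v² dx dy )^{1/4}. -/

import Mathlib

/-!
The estimate rests on Ladyzhenskaya's inequality on the strip,
`∬ φ⁴ ≤ 2 (∬ φ²) (∬ |Dφ|²)`, for `C¹` functions vanishing for large `|x|` and on `y = 0`.
By the fundamental theorem of calculus `φ(x,y)²` is at most `2 ∫ |φ φ_y|` along the vertical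
segment from the boundary and at most `2 ∫ |φ φ_x|` along the horizontal line, so `φ⁴` is bounded by
a product of a function of `x` and a function of `y`; Fubini and Cauchy–Schwarz turn this into
`4 ‖φ‖₂² ‖φ_x‖₂ ‖φ_y‖₂`. Cauchy–Schwarz twice then gives `∬ |u v v_x| ≤ ‖u‖₄ ‖v‖₄ ‖v_x‖₂`,
and the estimate follows with `c = 2`.
-/

open MeasureTheory Real Set

noncomputable section

/-- Partial derivative in `x`. -/
def px (φ : ℝ → ℝ → ℝ) (x y : ℝ) : ℝ := deriv (fun t => φ t y) x

/-- Partial derivative in `y`. -/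
def py (φ : ℝ → ℝ → ℝ) (x y : ℝ) : ℝ := deriv (fun t => φ x t) y

/-- A `C¹` test function on the strip `ℝ × (0, L)`. -/
structure IsC1TestFun (L : ℝ) (φ : ℝ → ℝ → ℝ) : Prop where
  smooth : ContDiff ℝ 1 (fun p : ℝ × ℝ => φ p.1 p.2)
  supp : ∃ R > 0, ∀ x y : ℝ, R ≤ |x| → φ x y = 0
  bc0 : ∀ x : ℝ, φ x 0 = 0
  bcL : ∀ x : ℝ, φ x L = 0

open Filter Topology

lemma sq_integral_abs_mul_le {α : Type*} [MeasurableSpace α] {μ : Measure α} {f g : α → ℝ}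
    (hf : MemLp f 2 μ) (hg : MemLp g 2 μ) :
    (∫ a, |f a * g a| ∂μ) ^ 2 ≤ (∫ a, f a ^ 2 ∂μ) * ∫ a, g a ^ 2 ∂μ := by
  have holder := integral_mul_norm_le_Lp_mul_Lq (f := f) (g := g) Real.HolderConjugate.two_two
    (by rwa [ENNReal.ofReal_ofNat]) (by rwa [ENNReal.ofReal_ofNat])
  simp only [Real.norm_eq_abs, ← abs_mul, Real.rpow_two, sq_abs, ← Real.sqrt_eq_rpow] at holder
  calc (∫ a, |f a * g a| ∂μ) ^ 2 ≤ (√(∫ a, f a ^ 2 ∂μ) * √(∫ a, g a ^ 2 ∂μ)) ^ 2 :=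
        pow_le_pow_left₀ (integral_nonneg fun _ => abs_nonneg _) holder 2
    _ = _ := by
        rw [mul_pow, Real.sq_sqrt (integral_nonneg fun _ => sq_nonneg _),
          Real.sq_sqrt (integral_nonneg fun _ => sq_nonneg _)]

lemma integral_abs_mul_mul_pow_four_le {α : Type*} [MeasurableSpace α] {μ : Measure α}
    {f g h : α → ℝ} (hfg : MemLp (fun a => f a * g a) 2 μ) (hh : MemLp h 2 μ)
    (hf : MemLp (fun a => f a ^ 2) 2 μ) (hg : MemLp (fun a => g a ^ 2) 2 μ) :
    (∫ a, |f a * g a * h a| ∂μ) ^ 4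
      ≤ (∫ a, f a ^ 4 ∂μ) * (∫ a, g a ^ 4 ∂μ) * (∫ a, h a ^ 2 ∂μ) ^ 2 := by
  have hcs₁ := sq_integral_abs_mul_le hfg hh
  have hcs₂ := sq_integral_abs_mul_le hf hg
  simp only [abs_sq, ← pow_mul, ← mul_pow, Nat.reduceMul] at hcs₂
  calc (∫ a, |f a * g a * h a| ∂μ) ^ 4 = ((∫ a, |f a * g a * h a| ∂μ) ^ 2) ^ 2 := by ring
    _ ≤ ((∫ a, (f a * g a) ^ 2 ∂μ) * ∫ a, h a ^ 2 ∂μ) ^ 2 := by gcongr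
    _ = (∫ a, (f a * g a) ^ 2 ∂μ) ^ 2 * (∫ a, h a ^ 2 ∂μ) ^ 2 := by ring
    _ ≤ _ := by gcongr

lemma le_two_mul_rpow_quarters {T a b c d : ℝ} (hT : 0 ≤ T) (ha : 0 ≤ a) (hb : 0 ≤ b)
    (hc : 0 ≤ c) (hd : 0 ≤ d) (h : T ^ 4 ≤ 16 * (a * b * c * d ^ 3)) :
    T ≤ 2 * b ^ ((1:ℝ) / 4) * a ^ ((1:ℝ) / 4) * d ^ ((3:ℝ) / 4) * c ^ ((1:ℝ) / 4) := by
  have hquarter {x : ℝ} (hx : 0 ≤ x) : (x ^ ((1:ℝ) / 4)) ^ 4 = x := by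
    rw [← Real.rpow_natCast, ← Real.rpow_mul hx]
    norm_num
  have hthreeQuarters : (d ^ ((3:ℝ) / 4)) ^ 4 = d ^ 3 := by
    rw [← Real.rpow_natCast, ← Real.rpow_mul hd]
    norm_num
  refine (pow_le_pow_iff_left₀ hT (by positivity) four_ne_zero).1 ?_
  rw [mul_pow, mul_pow, mul_pow, mul_pow, hquarter ha, hquarter hb, hquarter hc, hthreeQuarters]
  linarith

lemma four_mul_le_two_mul_mul_add {p q X Y Z : ℝ} (hp : 0 ≤ p) (hq : 0 ≤ q) (hX : 0 ≤ X)
    (hY : 0 ≤ Y) (hZ : 0 ≤ Z) (hpZ : p ^ 2 ≤ X * Z) (hqY : q ^ 2 ≤ X * Y) :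
    4 * (p * q) ≤ 2 * X * (Y + Z) := by
  refine (sq_le_sq₀ (by positivity) (by positivity)).1 ?_
  calc (4 * (p * q)) ^ 2 = 16 * (p ^ 2 * q ^ 2) := by ring
    _ ≤ 16 * ((X * Z) * (X * Y)) := by gcongr
    _ ≤ (2 * X * (Y + Z)) ^ 2 := by nlinarith [sq_nonneg (Y - Z), sq_nonneg X]

lemma sq_le_two_mul_setIntegral_abs_mul_deriv {f f' : ℝ → ℝ} {a b : ℝ} {s : Set ℝ}
    (hf : ∀ t, HasDerivAt f (f' t) t) (hf' : Continuous f') (ha : f a = 0) (hab : a ≤ b)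
    (hs : Ioc a b ⊆ s) (hint : IntegrableOn (fun t => f t * f' t) s) :
    f b ^ 2 ≤ 2 * ∫ t in s, |f t * f' t| := by
  have hcont : Continuous fun t => 2 * (f t * f' t) :=
    continuous_const.mul ((continuous_iff_continuousAt.2 fun t => (hf t).continuousAt).mul hf')
  have hftc : ∫ t in a..b, 2 * (f t * f' t) = f b ^ 2 := by
    rw [intervalIntegral.integral_eq_sub_of_hasDerivAt (f := fun t => f t ^ 2)
      (fun t _ => ((hf t).fun_pow 2).congr_deriv (by push_cast; ring))
      (hcont.intervalIntegrable a b), ha]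
    ring
  calc f b ^ 2 = 2 * ∫ t in a..b, f t * f' t := by
        rw [← hftc, intervalIntegral.integral_const_mul]
    _ ≤ 2 * ∫ t in a..b, |f t * f' t| := by
        gcongr
        exact (le_abs_self _).trans (intervalIntegral.abs_integral_le_integral_abs hab)
    _ ≤ 2 * ∫ t in s, |f t * f' t| := by
        rw [intervalIntegral.integral_of_le hab]
        exact mul_le_mul_of_nonneg_left (setIntegral_mono_set hint.abs
          (Eventually.of_forall fun _ => abs_nonneg _) (Eventually.of_forall hs)) zero_le_two

section PartialDerivatives

variable {φ : ℝ → ℝ → ℝ} (hφ : ContDiff ℝ 1 (fun p : ℝ × ℝ => φ p.1 p.2))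
include hφ

lemma hasDerivAt_fderiv_apply_px (x y : ℝ) :
    HasDerivAt (fun t => φ t y) (fderiv ℝ (fun p : ℝ × ℝ => φ p.1 p.2) (x, y) (1, 0)) x :=
  ((hφ.differentiable one_ne_zero (x, y)).hasFDerivAt.comp_hasDerivAt x
    ((hasDerivAt_id' x).prodMk (hasDerivAt_const x y)) :)

lemma hasDerivAt_fderiv_apply_py (x y : ℝ) :
    HasDerivAt (fun t => φ x t) (fderiv ℝ (fun p : ℝ × ℝ => φ p.1 p.2) (x, y) (0, 1)) y :=
  ((hφ.differentiable one_ne_zero (x, y)).hasFDerivAt.comp_hasDerivAt y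
    ((hasDerivAt_const y x).prodMk (hasDerivAt_id' y)) :)

lemma px_eq_fderiv (x y : ℝ) : px φ x y = fderiv ℝ (fun p : ℝ × ℝ => φ p.1 p.2) (x, y) (1, 0) :=
  (hasDerivAt_fderiv_apply_px hφ x y).deriv

lemma py_eq_fderiv (x y : ℝ) : py φ x y = fderiv ℝ (fun p : ℝ × ℝ => φ p.1 p.2) (x, y) (0, 1) :=
  (hasDerivAt_fderiv_apply_py hφ x y).deriv

lemma hasDerivAt_px (x y : ℝ) : HasDerivAt (fun t => φ t y) (px φ x y) x :=
  px_eq_fderiv hφ x y ▸ hasDerivAt_fderiv_apply_px hφ x y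

lemma hasDerivAt_py (x y : ℝ) : HasDerivAt (fun t => φ x t) (py φ x y) y :=
  py_eq_fderiv hφ x y ▸ hasDerivAt_fderiv_apply_py hφ x y

lemma continuous_px : Continuous (fun p : ℝ × ℝ => px φ p.1 p.2) := by
  simp only [px_eq_fderiv hφ]
  exact (hφ.continuous_fderiv one_ne_zero).clm_apply continuous_const

lemma continuous_py : Continuous (fun p : ℝ × ℝ => py φ p.1 p.2) := by
  simp only [py_eq_fderiv hφ]
  exact (hφ.continuous_fderiv one_ne_zero).clm_apply continuous_const

end PartialDerivatives

section Vanishing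

variable {φ : ℝ → ℝ → ℝ} {R x : ℝ} (hφ : ∀ x y, R ≤ |x| → φ x y = 0)
include hφ

lemma px_eq_zero_of_lt_abs (hx : R < |x|) (y : ℝ) : px φ x y = 0 := by
  have hzero : (fun t => φ t y) =ᶠ[𝓝 x] fun _ => 0 := by
    filter_upwards [(isOpen_lt continuous_const continuous_abs).mem_nhds hx] with t ht
    exact hφ t y ht.le
  rw [px, hzero.deriv_eq, deriv_const]

lemma py_eq_zero_of_le_abs (hx : R ≤ |x|) (y : ℝ) : py φ x y = 0 := by
  rw [py, funext fun t => hφ x t hx, deriv_const]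

lemma eq_zero_and_px_py_eq_zero_of_lt_abs (hx : R < |x|) (y : ℝ) :
    φ x y = 0 ∧ px φ x y = 0 ∧ py φ x y = 0 :=
  ⟨hφ x y hx.le, px_eq_zero_of_lt_abs hφ hx y, py_eq_zero_of_le_abs hφ hx.le y⟩

end Vanishing

/-- The measure `dx dy` on the strip `Σ = ℝ × (0, L)`. -/
abbrev stripMeasure (L : ℝ) : Measure (ℝ × ℝ) := volume.prod (volume.restrict (Ioo 0 L))

lemma ae_snd_mem_stripMeasure (L : ℝ) : ∀ᵐ p ∂stripMeasure L, p.2 ∈ Ioo 0 L :=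
  Measure.quasiMeasurePreserving_snd.ae (ae_restrict_mem measurableSet_Ioo)

lemma integrable_stripMeasure {L R : ℝ} {f : ℝ × ℝ → ℝ} (hf : Continuous f)
    (hR : ∀ p : ℝ × ℝ, R < |p.1| → f p = 0) : Integrable f (stripMeasure L) := by
  have hK : IntegrableOn f (Icc (-R) R ×ˢ Icc 0 L) :=
    hf.continuousOn.integrableOn_compact (isCompact_Icc.prod isCompact_Icc)
  have hstrip : IntegrableOn f (univ ×ˢ Icc 0 L) := by
    refine hK.of_forall_sdiff_eq_zero (MeasurableSet.univ.prod measurableSet_Icc) ?_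
    rintro p ⟨⟨-, hy⟩, hpK⟩
    refine hR p (not_le.1 fun hx => hpK ⟨abs_le.1 hx, hy⟩)
  have hμ : stripMeasure L = volume.restrict (univ ×ˢ Ioo 0 L) := by
    rw [Measure.volume_eq_prod, ← Measure.prod_restrict, Measure.restrict_univ]
  rw [hμ]
  exact hstrip.mono_set (prod_mono subset_rfl Ioo_subset_Icc_self)

lemma memLp_two_stripMeasure {L R : ℝ} {f : ℝ × ℝ → ℝ} (hf : Continuous f)
    (hR : ∀ p : ℝ × ℝ, R < |p.1| → f p = 0) : MemLp f 2 (stripMeasure L) :=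
  (memLp_two_iff_integrable_sq hf.aestronglyMeasurable).2 <|
    integrable_stripMeasure (R := R) (hf.pow 2) fun p hp => by simp [hR p hp]

section Ladyzhenskaya

variable {L R : ℝ} {φ : ℝ → ℝ → ℝ} (hφ : ContDiff ℝ 1 (fun p : ℝ × ℝ => φ p.1 p.2))
include hφ

lemma sq_le_two_mul_integral_abs_mul_py (h0 : ∀ x, φ x 0 = 0) {x y : ℝ} (hy : y ∈ Ioo 0 L) :
    φ x y ^ 2 ≤ 2 * ∫ t in Ioo 0 L, |φ x t * py φ x t| := by
  have hcont : Continuous fun t => py φ x t :=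
    (continuous_py hφ).comp (continuous_const.prodMk continuous_id)
  refine sq_le_two_mul_setIntegral_abs_mul_deriv (hasDerivAt_py hφ x) hcont (h0 x) hy.1.le
    (Ioc_subset_Ioo_right hy.2) ?_
  exact ((hφ.continuous.comp (continuous_const.prodMk continuous_id)).mul hcont).continuousOn
    |>.integrableOn_Icc.mono_set Ioo_subset_Icc_self

lemma sq_le_two_mul_integral_abs_mul_px (hR : ∀ x y, R ≤ |x| → φ x y = 0) (x y : ℝ) :
    φ x y ^ 2 ≤ 2 * ∫ t, |φ t y * px φ t y| := by
  have hcont : Continuous fun t => px φ t y :=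
    (continuous_px hφ).comp (continuous_id.prodMk continuous_const)
  have hsupp : HasCompactSupport fun t => φ t y * px φ t y := by
    refine HasCompactSupport.intro (isCompact_closedBall 0 R) fun t ht => ?_
    rw [Metric.mem_closedBall, Real.dist_eq, sub_zero, not_le] at ht
    rw [hR t y ht.le, zero_mul]
  have hint := ((hφ.continuous.comp (continuous_id.prodMk continuous_const)).mul hcont)
    |>.integrable_of_hasCompactSupport (μ := volume) hsupp
  have hleft : φ (min x (-R)) y = 0 :=
    hR _ y ((le_neg.1 (min_le_right x (-R))).trans (neg_le_abs _))
  simpa only [Measure.restrict_univ] using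
    sq_le_two_mul_setIntegral_abs_mul_deriv (s := univ) (hasDerivAt_px hφ · y) hcont hleft
      (min_le_left x (-R)) (subset_univ _) hint.integrableOn

theorem integral_pow_four_le_stripMeasure (hR : ∀ x y, R ≤ |x| → φ x y = 0)
    (h0 : ∀ x, φ x 0 = 0) :
    ∫ p, φ p.1 p.2 ^ 4 ∂stripMeasure L ≤ 2 * (∫ p, φ p.1 p.2 ^ 2 ∂stripMeasure L) *
      ∫ p, (px φ p.1 p.2 ^ 2 + py φ p.1 p.2 ^ 2) ∂stripMeasure L := by
  have hzero (p : ℝ × ℝ) (hp : R < |p.1|) := eq_zero_and_px_py_eq_zero_of_lt_abs hR hp p.2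
  have hφ2 : MemLp (fun p : ℝ × ℝ => φ p.1 p.2) 2 (stripMeasure L) :=
    memLp_two_stripMeasure hφ.continuous fun p hp => (hzero p hp).1
  have hx2 : MemLp (fun p : ℝ × ℝ => px φ p.1 p.2) 2 (stripMeasure L) :=
    memLp_two_stripMeasure (continuous_px hφ) fun p hp => (hzero p hp).2.1
  have hy2 : MemLp (fun p : ℝ × ℝ => py φ p.1 p.2) 2 (stripMeasure L) :=
    memLp_two_stripMeasure (continuous_py hφ) fun p hp => (hzero p hp).2.2
  have hφx := (hφ2.integrable_mul hx2).abs
  have hφy := (hφ2.integrable_mul hy2).abs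
  set A : ℝ → ℝ := fun y => ∫ x, |φ x y * px φ x y|
  set B : ℝ → ℝ := fun x => ∫ y in Ioo 0 L, |φ x y * py φ x y|
  have hA : ∫ y in Ioo 0 L, A y = ∫ p, |φ p.1 p.2 * px φ p.1 p.2| ∂stripMeasure L :=
    (integral_prod_symm _ hφx).symm
  have hB : ∫ x, B x = ∫ p, |φ p.1 p.2 * py φ p.1 p.2| ∂stripMeasure L :=
    integral_integral hφy
  have hpointwise : ∀ᵐ p ∂stripMeasure L, φ p.1 p.2 ^ 4 ≤ 4 * (B p.1 * A p.2) := by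
    filter_upwards [ae_snd_mem_stripMeasure L] with p hp
    have hB := sq_le_two_mul_integral_abs_mul_py hφ h0 (x := p.1) hp
    have hA := sq_le_two_mul_integral_abs_mul_px hφ hR p.1 p.2
    calc φ p.1 p.2 ^ 4 = φ p.1 p.2 ^ 2 * φ p.1 p.2 ^ 2 := by ring
      _ ≤ (2 * B p.1) * (2 * A p.2) := mul_le_mul hB hA (sq_nonneg _) (by positivity)
      _ = 4 * (B p.1 * A p.2) := by ring
  calc ∫ p, φ p.1 p.2 ^ 4 ∂stripMeasure L
      ≤ ∫ p, 4 * (B p.1 * A p.2) ∂stripMeasure L :=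
        integral_mono_of_nonneg (Eventually.of_forall fun _ => by positivity)
          ((hφy.integral_prod_left.mul_prod hφx.integral_prod_right).const_mul 4) hpointwise
    _ = 4 * ((∫ p, |φ p.1 p.2 * py φ p.1 p.2| ∂stripMeasure L) *
          ∫ p, |φ p.1 p.2 * px φ p.1 p.2| ∂stripMeasure L) := by
        rw [integral_const_mul, integral_prod_mul, hA, hB]
    _ ≤ 2 * (∫ p, φ p.1 p.2 ^ 2 ∂stripMeasure L) * ((∫ p, px φ p.1 p.2 ^ 2 ∂stripMeasure L) +
          ∫ p, py φ p.1 p.2 ^ 2 ∂stripMeasure L) :=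
        four_mul_le_two_mul_mul_add (by positivity) (by positivity) (by positivity)
          (by positivity) (by positivity)
          (sq_integral_abs_mul_le hφ2 hy2) (sq_integral_abs_mul_le hφ2 hx2)
    _ = _ := by rw [integral_add hx2.integrable_sq hy2.integrable_sq]

end Ladyzhenskaya

theorem integral_abs_mul_mul_px_le_stripMeasure {L R : ℝ} {u v : ℝ → ℝ → ℝ}
    (hu : ContDiff ℝ 1 (fun p : ℝ × ℝ => u p.1 p.2))
    (hv : ContDiff ℝ 1 (fun p : ℝ × ℝ => v p.1 p.2))
    (hRu : ∀ x y, R ≤ |x| → u x y = 0) (hRv : ∀ x y, R ≤ |x| → v x y = 0)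
    (hu0 : ∀ x, u x 0 = 0) (hv0 : ∀ x, v x 0 = 0) :
    ∫ p, |u p.1 p.2 * v p.1 p.2 * px v p.1 p.2| ∂stripMeasure L
      ≤ 2 * (∫ p, (px u p.1 p.2 ^ 2 + py u p.1 p.2 ^ 2) ∂stripMeasure L) ^ ((1:ℝ) / 4)
          * (∫ p, u p.1 p.2 ^ 2 ∂stripMeasure L) ^ ((1:ℝ) / 4)
          * (∫ p, (px v p.1 p.2 ^ 2 + py v p.1 p.2 ^ 2) ∂stripMeasure L) ^ ((3:ℝ) / 4)
          * (∫ p, v p.1 p.2 ^ 2 ∂stripMeasure L) ^ ((1:ℝ) / 4) := by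
  have hzero (p : ℝ × ℝ) (hp : R < |p.1|) :=
    And.intro (eq_zero_and_px_py_eq_zero_of_lt_abs hRu hp p.2)
      (eq_zero_and_px_py_eq_zero_of_lt_abs hRv hp p.2)
  have huv : MemLp (fun p : ℝ × ℝ => u p.1 p.2 * v p.1 p.2) 2 (stripMeasure L) :=
    memLp_two_stripMeasure (R := R) (hu.continuous.mul hv.continuous) fun p hp => by
      simp [hzero p hp]
  have hu2 : MemLp (fun p : ℝ × ℝ => u p.1 p.2 ^ 2) 2 (stripMeasure L) :=
    memLp_two_stripMeasure (R := R) (hu.continuous.pow 2) fun p hp => by simp [hzero p hp]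
  have hv2 : MemLp (fun p : ℝ × ℝ => v p.1 p.2 ^ 2) 2 (stripMeasure L) :=
    memLp_two_stripMeasure (R := R) (hv.continuous.pow 2) fun p hp => by simp [hzero p hp]
  have hvx : MemLp (fun p : ℝ × ℝ => px v p.1 p.2) 2 (stripMeasure L) :=
    memLp_two_stripMeasure (continuous_px hv) fun p hp => (hzero p hp).2.2.1
  have hvy : MemLp (fun p : ℝ × ℝ => py v p.1 p.2) 2 (stripMeasure L) :=
    memLp_two_stripMeasure (continuous_py hv) fun p hp => (hzero p hp).2.2.2
  have hholder := integral_abs_mul_mul_pow_four_le huv hvx hu2 hv2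
  have hlu := integral_pow_four_le_stripMeasure (L := L) hu hRu hu0
  have hlv := integral_pow_four_le_stripMeasure (L := L) hv hRv hv0
  have hvx_le : ∫ p, px v p.1 p.2 ^ 2 ∂stripMeasure L
      ≤ ∫ p, (px v p.1 p.2 ^ 2 + py v p.1 p.2 ^ 2) ∂stripMeasure L :=
    integral_mono hvx.integrable_sq (hvx.integrable_sq.add hvy.integrable_sq)
      fun p => le_add_of_nonneg_right (sq_nonneg _)
  set a := ∫ p, u p.1 p.2 ^ 2 ∂stripMeasure L
  set b := ∫ p, (px u p.1 p.2 ^ 2 + py u p.1 p.2 ^ 2) ∂stripMeasure L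
  set c := ∫ p, v p.1 p.2 ^ 2 ∂stripMeasure L
  set d := ∫ p, (px v p.1 p.2 ^ 2 + py v p.1 p.2 ^ 2) ∂stripMeasure L
  have habcd : 0 ≤ a * b * c * d ^ 3 := by positivity
  refine le_two_mul_rpow_quarters (by positivity) (by positivity) (by positivity) (by positivity)
    (by positivity) (hholder.trans ?_)
  calc _ ≤ (2 * a * b) * (2 * c * d) * d ^ 2 := by gcongr
    _ ≤ 16 * (a * b * c * d ^ 3) := by linarith

/-- Trilinear estimate on the strip with an absolute constant, uniform in `L`. -/
theorem trilinear_estimate :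
    ∃ c > 0, ∀ L : ℝ, 0 < L → ∀ u v : ℝ → ℝ → ℝ,
      IsC1TestFun L u → IsC1TestFun L v →
      (∫ x : ℝ, ∫ y in Ioo (0:ℝ) L, |u x y * v x y * px v x y|)
        ≤ c * (∫ x : ℝ, ∫ y in Ioo (0:ℝ) L, ((px u x y) ^ 2 + (py u x y) ^ 2)) ^ ((1:ℝ) / 4)
            * (∫ x : ℝ, ∫ y in Ioo (0:ℝ) L, (u x y) ^ 2) ^ ((1:ℝ) / 4)
            * (∫ x : ℝ, ∫ y in Ioo (0:ℝ) L, ((px v x y) ^ 2 + (py v x y) ^ 2)) ^ ((3:ℝ) / 4)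
            * (∫ x : ℝ, ∫ y in Ioo (0:ℝ) L, (v x y) ^ 2) ^ ((1:ℝ) / 4) := by
  refine ⟨2, two_pos, fun L _ u v hu hv => ?_⟩
  obtain ⟨Ru, -, hRu⟩ := hu.supp
  obtain ⟨Rv, -, hRv⟩ := hv.supp
  set R := max Ru Rv
  have hRu' (x y : ℝ) (hx : R ≤ |x|) : u x y = 0 := hRu x y ((le_max_left _ _).trans hx)
  have hRv' (x y : ℝ) (hx : R ≤ |x|) : v x y = 0 := hRv x y ((le_max_right _ _).trans hx)
  have hzero (p : ℝ × ℝ) (hp : R < |p.1|) :=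
    And.intro (eq_zero_and_px_py_eq_zero_of_lt_abs hRu' hp p.2)
      (eq_zero_and_px_py_eq_zero_of_lt_abs hRv' hp p.2)
  have hiter (f : ℝ → ℝ → ℝ) (hf : Continuous fun p : ℝ × ℝ => f p.1 p.2)
      (hR : ∀ p : ℝ × ℝ, R < |p.1| → f p.1 p.2 = 0) :
      ∫ x, ∫ y in Ioo 0 L, f x y = ∫ p, f p.1 p.2 ∂stripMeasure L :=
    integral_integral (integrable_stripMeasure hf hR)
  have := hu.smooth.continuous
  have := hv.smooth.continuous
  have := continuous_px hu.smooth
  have := continuous_py hu.smooth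
  have := continuous_px hv.smooth
  have := continuous_py hv.smooth
  convert integral_abs_mul_mul_px_le_stripMeasure (L := L) hu.smooth hv.smooth hRu' hRv' hu.bc0
    hv.bc0 using 6
  all_goals
    refine hiter _ ?_ fun p hp => ?_
    · fun_prop
    · simp [hzero p hp]
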